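/- arXiv:2006.15143 — 2 statements merged into one kernel-verified Lean document; each statement's English description precedes it below -/
import Mathlib

section
/- Let u : ℝ → ℝ be of class C⁵, fix x ∈ ℝ, κ ∈ ℝ with κ ≠ 1, and ν > 0, and set α = 1/(3·(1−κ)). Define the face-gradient approximation G(h) = ν·(u(x+h) − u(x))/h + (ν·α/(2h))·(uR(u,h) − uL(u,h)). Then G(h) is fourth-order accurate at the face: G(h) − ν·u'(x + h/2) = O(h⁴) as h → 0⁺. In particular, for the QUICK value κ = 1/2 the compatible damping coefficient is α = 2/3. -/
open Asymptotics Filter Set MeasureTheory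

noncomputable def uL (κ x : ℝ) (v : ℝ → ℝ) (h : ℝ) : ℝ :=
  (v x + v (x + h)) / 2 - ((1 - κ) / 4) * (v (x + h) - 2 * v x + v (x - h))

noncomputable def uR (κ x : ℝ) (v : ℝ → ℝ) (h : ℝ) : ℝ :=
  (v (x + h) + v x) / 2 - ((1 - κ) / 4) * (v (x + 2 * h) - 2 * v (x + h) + v x)

/-- Left-face interpolated value from the left: same formula with `x` replaced by `x - h`. -/
noncomputable def uLm (κ x : ℝ) (v : ℝ → ℝ) (h : ℝ) : ℝ := uL κ (x - h) v h

/-- Left-face interpolated value from the right: same formula with `x` replaced by `x - h`. -/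
noncomputable def uRm (κ x : ℝ) (v : ℝ → ℝ) (h : ℝ) : ℝ := uR κ (x - h) v h

/-! With `α = 1 / (3 (1 - κ))` the face gradient is, for every `κ ≠ 1`, the classical staggered
stencil `ν (27 (u(x+h) - u(x)) - (u(x+2h) - u(x-h))) / (24 h)`. Expanding `u` about `x` to order
four and `u'` to order three, the Taylor polynomials cancel exactly against `24 h u'(x + h/2)`, so
the numerator is `O(h⁵)` and the error is `O(h⁴)`. -/

open scoped Topology Nat

theorem taylor_isBigO_univ {E : Type*} [NormedAddCommGroup E] [NormedSpace ℝ E]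
    {f : ℝ → E} {x₀ : ℝ} {n : ℕ} (hf : ContDiff ℝ (n + 1) f) :
    (fun x ↦ f x - taylorWithinEval f n univ x₀ x) =O[𝓝 x₀] fun x ↦ (x - x₀) ^ (n + 1) := by
  have hnext : (fun x ↦ f x - taylorWithinEval f (n + 1) univ x₀ x) =O[𝓝 x₀]
      fun x ↦ (x - x₀) ^ (n + 1) := (taylor_isLittleO_univ (by exact_mod_cast hf)).isBigO
  have hterm : (fun x ↦ (((n + 1 : ℝ) * n !)⁻¹ * (x - x₀) ^ (n + 1)) •
      iteratedDerivWithin (n + 1) f univ x₀) =O[𝓝 x₀] fun x ↦ (x - x₀) ^ (n + 1) :=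
    (((isBigO_refl _ _).const_mul_left _).smul
      (isBigO_const_one ℝ (iteratedDerivWithin (n + 1) f univ x₀) _)).congr_right (by simp)
  refine (hnext.add hterm).congr_left fun x ↦ ?_
  rw [taylorWithinEval_succ]
  abel

theorem taylor_isBigO_comp_add_mul {E : Type*} [NormedAddCommGroup E] [NormedSpace ℝ E]
    {f : ℝ → E} {n : ℕ} (hf : ContDiff ℝ (n + 1) f) (x a : ℝ) :
    (fun h ↦ f (x + a * h) - ∑ k ∈ Finset.range (n + 1),
        ((k ! : ℝ)⁻¹ * (a * h) ^ k) • iteratedDeriv k f x) =O[𝓝 0] fun h ↦ h ^ (n + 1) := by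
  have hline : Tendsto (fun h : ℝ ↦ x + a * h) (𝓝 0) (𝓝 x) :=
    (show Continuous fun h : ℝ ↦ x + a * h by fun_prop).tendsto' 0 x (by simp)
  refine ((taylor_isBigO_univ hf).comp_tendsto hline).congr_left (fun h ↦ ?_) |>.trans <|
    ((isBigO_refl _ _).const_mul_left (a ^ (n + 1))).congr_left fun h ↦ ?_
  · simp [taylor_within_apply, iteratedDerivWithin_univ]
  · simp [mul_pow]

theorem isBigO_div_self_of_isBigO_pow_succ {f : ℝ → ℝ} {n : ℕ}
    (hf : f =O[𝓝 0] fun h ↦ h ^ (n + 1)) : (fun h ↦ f h / h) =O[𝓝[≠] 0] fun h ↦ h ^ n := by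
  refine ((hf.mono nhdsWithin_le_nhds).mul (isBigO_refl (fun h : ℝ ↦ h⁻¹) _)).congr' ?_ ?_
  · exact .rfl
  · filter_upwards [self_mem_nhdsWithin] with h hh
    rw [pow_succ, mul_inv_cancel_right₀ hh]

theorem staggered_stencil_sub_deriv_isBigO {u : ℝ → ℝ} (hu : ContDiff ℝ 5 u) (x : ℝ) :
    (fun h ↦ 27 * (u (x + h) - u x) - (u (x + 2 * h) - u (x - h)) -
      24 * h * deriv u (x + h / 2)) =O[𝓝 0] fun h ↦ h ^ 5 := by
  have hu' : ContDiff ℝ (4 + 1) u := hu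
  have hdu : ContDiff ℝ (3 + 1) (deriv u) := hu'.deriv'
  have e₁ := taylor_isBigO_comp_add_mul hu' x 1
  have e₂ := taylor_isBigO_comp_add_mul hu' x 2
  have eₘ := taylor_isBigO_comp_add_mul hu' x (-1)
  have e' := (isBigO_refl (fun h : ℝ ↦ h) _).mul (taylor_isBigO_comp_add_mul hdu x (1 / 2))
  refine (((e₁.const_mul_left 27).sub e₂).add eₘ |>.sub <|
    (e'.const_mul_left 24).congr_right fun h ↦ (pow_succ' h 4).symm).congr_left fun h ↦ ?_
  simp only [Finset.sum_range_succ, Finset.sum_range_zero, smul_eq_mul, ← iteratedDeriv_succ',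
    iteratedDeriv_zero, iteratedDeriv_one]
  rw [show x + 1 * h = x + h by ring, show x + -1 * h = x - h by ring,
    show x + 1 / 2 * h = x + h / 2 by ring]
  norm_num [Nat.factorial]
  ring

theorem uR_sub_uL (κ x : ℝ) (v : ℝ → ℝ) (h : ℝ) :
    uR κ x v h - uL κ x v h =
      (1 - κ) / 4 * (3 * (v (x + h) - v x) - (v (x + 2 * h) - v (x - h))) := by
  simp only [uR, uL]
  ring

theorem quick_face_gradient_fourth_order_general (u : ℝ → ℝ) (hu : ContDiff ℝ 5 u)
    (x κ ν α : ℝ) (hκ : κ ≠ 1) (hα : α = 1 / (3 * (1 - κ))) :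
    ((fun h : ℝ =>
        (ν * (u (x + h) - u x) / h + (ν * α / (2 * h)) * (uR κ x u h - uL κ x u h))
        - ν * deriv u (x + h / 2))
      =O[nhdsWithin 0 (Set.Ioi 0)] fun h : ℝ => h ^ 4) ∧
    (κ = 1 / 2 → α = 2 / 3) := by
  refine ⟨?_, fun hhalf ↦ by rw [hα, hhalf]; norm_num⟩
  have hstaggered := (isBigO_div_self_of_isBigO_pow_succ
    (staggered_stencil_sub_deriv_isBigO hu x)).const_mul_left (ν / 24)
  refine (hstaggered.mono (nhdsWithin_mono _ fun h hh ↦ ne_of_gt hh)).congr' ?_ .rfl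
  filter_upwards [self_mem_nhdsWithin] with h (hh : 0 < h)
  rw [uR_sub_uL, hα]
  field_simp [sub_ne_zero.mpr hκ.symm, hh.ne']
  ring

theorem quick_face_gradient_fourth_order (u : ℝ → ℝ) (hu : ContDiff ℝ 5 u)
    (x κ ν α : ℝ) (hκ : κ ≠ 1) (hν : 0 < ν) (hα : α = 1 / (3 * (1 - κ))) :
    ((fun h : ℝ =>
        (ν * (u (x + h) - u x) / h + (ν * α / (2 * h)) * (uR κ x u h - uL κ x u h))
        - ν * deriv u (x + h / 2))
      =O[nhdsWithin 0 (Set.Ioi 0)] fun h : ℝ => h ^ 4) ∧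
    (κ = 1 / 2 → α = 2 / 3) :=
  quick_face_gradient_fourth_order_general u hu x κ ν α hκ hα
end

section
/- Let f : ℝ → ℝ and u : ℝ → ℝ be of class C⁴, fix x ∈ ℝ and κ ∈ ℝ. Then the central flux balance of the κ-scheme approximates the cell-averaged convection operator with a second-order error whose coefficient is proportional to (2κ−1): (1/(2h))·(f(uL(u,h)) + f(uR(u,h)) − f(uL⁻(u,h)) − f(uR⁻(u,h))) = (1/h)·∫_{x−h/2}^{x+h/2} (f∘u)'(ξ) dξ + ((2κ−1)/8)·( f''(u(x))·u'(x)·u''(x) + f'(u(x))·u'''(x) )·h² + O(h³) as h → 0⁺. -/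
open Asymptotics Filter Set MeasureTheory

/-! The left-face values are the right-face values at `-h` (`uLm κ x u h = uR κ x u (-h)` and
`uRm κ x u h = uL κ x u (-h)`), so the flux balance is `D h - D (-h)` plus the exact flux
difference `2 (f (u (x + h/2)) - f (u (x - h/2)))`, where `D h = f uL + f uR - 2 f (u (x + h/2))`.
Both interpolated values are `u (x + h/2) + O(h²)`, so linearising `f` at `u (x + h/2)` gives
`D h = f' (u (x + h/2)) (uL + uR - 2 u (x + h/2)) + O(h⁴)`, and Taylor expansion of `u` and of
`f' ∘ u` turns this into `a h² + b h³ + O(h⁴)` with `b = (2κ - 1)/8 (f'' u' u'' + f' u''')`.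
Only the odd part `2 b h³` survives in `D h - D (-h)`, and the fundamental theorem of calculus
identifies the cell integral with the exact flux difference. -/

open scoped Topology Nat

theorem ContDiff.isBigO_sub_sum_taylor {w : ℝ → ℝ} {n : ℕ} (hw : ContDiff ℝ (n + 1) w)
    (x₀ : ℝ) :
    (fun y ↦ w y - ∑ k ∈ Finset.range (n + 1), iteratedDeriv k w x₀ / k ! * (y - x₀) ^ k)
      =O[𝓝 x₀] fun y ↦ (y - x₀) ^ (n + 1) := by
  have hR := (taylor_isLittleO_univ (x₀ := x₀) (n := n + 1) (by exact_mod_cast hw)).isBigO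
  have hTop := isBigO_const_mul_self (iteratedDeriv (n + 1) w x₀ / (n + 1)!)
    (fun y ↦ (y - x₀) ^ (n + 1)) (𝓝 x₀)
  refine (hR.add hTop).congr_left fun y ↦ ?_
  simp only [taylor_within_apply, iteratedDerivWithin_univ, smul_eq_mul,
    Finset.sum_range_succ _ (n + 1)]
  rw [Finset.sum_congr rfl fun k _ ↦ (by ring :
    (k ! : ℝ)⁻¹ * (y - x₀) ^ k * iteratedDeriv k w x₀ = iteratedDeriv k w x₀ / k ! * (y - x₀) ^ k)]
  ring

theorem ContDiff.isBigO_comp_add_mul_sub_sum_taylor {w : ℝ → ℝ} {n : ℕ}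
    (hw : ContDiff ℝ (n + 1) w) (x c : ℝ) :
    (fun h ↦ w (x + c * h) - ∑ k ∈ Finset.range (n + 1), iteratedDeriv k w x / k ! * (c * h) ^ k)
      =O[𝓝 0] fun h ↦ h ^ (n + 1) := by
  have hlin : Tendsto (fun h : ℝ ↦ x + c * h) (𝓝 0) (𝓝 x) :=
    Continuous.tendsto' (by fun_prop) 0 x (by simp)
  have H := (hw.isBigO_sub_sum_taylor x).comp_tendsto hlin
  simp only [Function.comp_def, add_sub_cancel_left] at H
  exact H.trans (by simpa only [mul_pow] using isBigO_const_mul_self (c ^ (n + 1)) _ _)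

lemma norm_sub_sub_deriv_mul_le_of_lipschitzOnWith {f : ℝ → ℝ} {K : NNReal} {a b : ℝ}
    (hf : ∀ y ∈ segment ℝ a b, DifferentiableAt ℝ f y)
    (hK : LipschitzOnWith K (deriv f) (segment ℝ a b)) :
    ‖f b - f a - deriv f a * (b - a)‖ ≤ K * ‖b - a‖ ^ 2 := by
  have hg : ∀ y ∈ segment ℝ a b,
      HasDerivWithinAt (fun z ↦ f z - deriv f a * z) (deriv f y - deriv f a) (segment ℝ a b) y :=
    fun y hy ↦ ((hf y hy).hasDerivAt.sub ((hasDerivAt_id y).const_mul _)).hasDerivWithinAt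
      |>.congr_deriv (by simp)
  have hbound : ∀ y ∈ segment ℝ a b, ‖deriv f y - deriv f a‖ ≤ K * ‖b - a‖ := fun y hy ↦
    (hK.norm_sub_le hy (left_mem_segment ℝ a b)).trans
      (by gcongr; exact norm_sub_le_of_mem_segment hy)
  calc ‖f b - f a - deriv f a * (b - a)‖
      = ‖(f b - deriv f a * b) - (f a - deriv f a * a)‖ := by ring_nf
    _ ≤ K * ‖b - a‖ * ‖b - a‖ :=
      (convex_segment a b).norm_image_sub_le_of_norm_hasDerivWithin_le hg hbound
        (left_mem_segment ℝ a b) (right_mem_segment ℝ a b)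
    _ = K * ‖b - a‖ ^ 2 := by ring

theorem ContDiff.isBigO_sub_sub_deriv_mul {f : ℝ → ℝ} (hf : ContDiff ℝ 2 f) {α : Type*}
    {l : Filter α} {m δ : α → ℝ} {a : ℝ} (hm : Tendsto m l (𝓝 a)) (hδ : Tendsto δ l (𝓝 0)) :
    (fun t ↦ f (m t + δ t) - f (m t) - deriv f (m t) * δ t) =O[l] fun t ↦ δ t ^ 2 := by
  obtain ⟨K, s, hs, hK⟩ := (hf.deriv' (n := 1)).contDiffAt.exists_lipschitzOnWith (x := a)
  obtain ⟨ε, hε, hball⟩ := Metric.mem_nhds_iff.1 hs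
  refine IsBigO.of_bound K ?_
  filter_upwards [hm (Metric.ball_mem_nhds a (half_pos hε)),
    hδ (Metric.ball_mem_nhds 0 (half_pos hε))] with t hmt hδt
  rw [Set.mem_preimage, Metric.mem_ball, Real.dist_eq, abs_lt] at hmt hδt
  have hseg : segment ℝ (m t) (m t + δ t) ⊆ s := by
    refine ((convex_ball a ε).segment_subset ?_ ?_).trans hball <;>
      rw [Metric.mem_ball, Real.dist_eq, abs_lt] <;> constructor <;> linarith
  have := norm_sub_sub_deriv_mul_le_of_lipschitzOnWith
    (fun y _ ↦ hf.differentiable (by norm_num) y) (hK.mono hseg)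
  simpa [norm_pow] using this

lemma uLm_eq_uR_neg (κ x : ℝ) (v : ℝ → ℝ) (h : ℝ) : uLm κ x v h = uR κ x v (-h) := by
  simp only [uLm, uL, uR]
  ring_nf

lemma uRm_eq_uL_neg (κ x : ℝ) (v : ℝ → ℝ) (h : ℝ) : uRm κ x v h = uL κ x v (-h) := by
  simp only [uRm, uR, uL]
  ring_nf

lemma isBigO_uL_sub_expansion {u : ℝ → ℝ} (hu : ContDiff ℝ 4 u) (κ x : ℝ) :
    (fun h ↦ uL κ x u h - u (x + h / 2) - ((2 * κ - 1) / 8 * iteratedDeriv 2 u x * h ^ 2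
      + iteratedDeriv 3 u x / 16 * h ^ 3)) =O[𝓝 0] fun h ↦ h ^ 4 := by
  have T := hu.isBigO_comp_add_mul_sub_sum_taylor (n := 3) x
  refine ((((T 1).const_mul_left ((1 + κ) / 4)).sub ((T (-1)).const_mul_left ((1 - κ) / 4))).sub
    (T (1 / 2))).congr_left fun h ↦ ?_
  simp only [uL, Finset.sum_range_succ, Finset.sum_range_zero, Nat.factorial, iteratedDeriv_zero]
  ring_nf

lemma isBigO_uR_sub_expansion {u : ℝ → ℝ} (hu : ContDiff ℝ 4 u) (κ x : ℝ) :
    (fun h ↦ uR κ x u h - u (x + h / 2) - ((2 * κ - 1) / 8 * iteratedDeriv 2 u x * h ^ 2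
      + (4 * κ - 3) / 16 * iteratedDeriv 3 u x * h ^ 3)) =O[𝓝 0] fun h ↦ h ^ 4 := by
  have T := hu.isBigO_comp_add_mul_sub_sum_taylor (n := 3) x
  refine ((((T 1).const_mul_left ((2 - κ) / 2)).sub ((T 2).const_mul_left ((1 - κ) / 4))).sub
    (T (1 / 2))).congr_left fun h ↦ ?_
  simp only [uR, Finset.sum_range_succ, Finset.sum_range_zero, Nat.factorial, iteratedDeriv_zero]
  ring_nf

lemma isBigO_deriv_comp_sub_expansion {f u : ℝ → ℝ} (hf : ContDiff ℝ 3 f) (hu : ContDiff ℝ 2 u)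
    (x : ℝ) :
    (fun h ↦ deriv f (u (x + h / 2))
      - (deriv f (u x) + iteratedDeriv 2 f (u x) * deriv u x / 2 * h)) =O[𝓝 0] fun h ↦ h ^ 2 := by
  have hf' : ContDiff ℝ 2 (deriv f) := hf.deriv'
  have hchain : deriv (fun y ↦ deriv f (u y)) x = iteratedDeriv 2 f (u x) * deriv u x := by
    rw [iteratedDeriv_succ, iteratedDeriv_one]
    exact deriv_comp x (hf'.differentiable (by norm_num) _) (hu.differentiable (by norm_num) x)
  refine ((hf'.comp hu).isBigO_comp_add_mul_sub_sum_taylor (n := 1) x (1 / 2)).congr_left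
    fun h ↦ ?_
  simp only [Function.comp_def, Finset.sum_range_succ, Finset.sum_range_zero, iteratedDeriv_zero,
    iteratedDeriv_one, hchain]
  ring_nf

lemma isBigO_quadratic_add_cubic (a b : ℝ) :
    (fun h : ℝ ↦ a * h ^ 2 + b * h ^ 3) =O[𝓝 0] fun h ↦ h ^ 2 :=
  (isBigO_const_mul_self a _ _).add
    ((isBigO_const_mul_self b _ _).trans (isLittleO_pow_pow (by norm_num)).isBigO)

noncomputable def faceFluxDefect (f : ℝ → ℝ) (κ x : ℝ) (u : ℝ → ℝ) (h : ℝ) : ℝ :=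
  f (uL κ x u h) + f (uR κ x u h) - 2 * f (u (x + h / 2))

lemma isBigO_faceFluxDefect_sub_expansion {f u : ℝ → ℝ} (hf : ContDiff ℝ 3 f)
    (hu : ContDiff ℝ 4 u) (κ x : ℝ) :
    (fun h ↦ faceFluxDefect f κ x u h
      - ((2 * κ - 1) / 4 * deriv f (u x) * iteratedDeriv 2 u x * h ^ 2
        + (2 * κ - 1) / 8 * (iteratedDeriv 2 f (u x) * deriv u x * iteratedDeriv 2 u x
          + deriv f (u x) * iteratedDeriv 3 u x) * h ^ 3)) =O[𝓝 0] fun h ↦ h ^ 4 := by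
  set m : ℝ → ℝ := fun h ↦ u (x + h / 2)
  have hm : Tendsto m (𝓝 0) (𝓝 (u x)) :=
    Continuous.tendsto' (hu.continuous.comp (by fun_prop)) 0 _ (by simp)
  have hL := isBigO_uL_sub_expansion hu κ x
  have hR := isBigO_uR_sub_expansion hu κ x
  have h4_2 : (fun h : ℝ ↦ h ^ 4) =O[𝓝 0] fun h ↦ h ^ 2 := (isLittleO_pow_pow (by norm_num)).isBigO
  have hδL : (fun h ↦ uL κ x u h - m h) =O[𝓝 0] fun h ↦ h ^ 2 :=
    ((hL.trans h4_2).add (isBigO_quadratic_add_cubic _ _)).congr_left fun h ↦ sub_add_cancel _ _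
  have hδR : (fun h ↦ uR κ x u h - m h) =O[𝓝 0] fun h ↦ h ^ 2 :=
    ((hR.trans h4_2).add (isBigO_quadratic_add_cubic _ _)).congr_left fun h ↦ sub_add_cancel _ _
  have hlin : ∀ {v : ℝ → ℝ}, (fun h ↦ v h - m h) =O[𝓝 0] (fun h ↦ h ^ 2) →
      (fun h ↦ f (v h) - f (m h) - deriv f (m h) * (v h - m h)) =O[𝓝 0] fun h ↦ h ^ 4 := by
    intro v hv
    have hv0 := hv.trans_tendsto ((continuous_pow 2).tendsto' 0 0 (by simp))
    have := ((hf.of_le (by norm_num)).isBigO_sub_sub_deriv_mul hm hv0).trans (hv.pow 2)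
    simpa only [add_sub_cancel, ← pow_mul] using this
  have hbdd : (fun h ↦ deriv f (m h)) =O[𝓝 0] fun _ ↦ (1 : ℝ) :=
    (((hf.continuous_deriv (by norm_num)).tendsto _).comp hm).isBigO_one ℝ
  have hsum := (hbdd.mul (hL.add hR)).congr_right fun h ↦ one_mul (h ^ 4)
  have hprod := (isBigO_deriv_comp_sub_expansion hf (hu.of_le (by norm_num)) x).mul
    (isBigO_quadratic_add_cubic ((2 * κ - 1) / 4 * iteratedDeriv 2 u x)
      ((2 * κ - 1) / 8 * iteratedDeriv 3 u x))
  have hquartic := isBigO_const_mul_self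
    (iteratedDeriv 2 f (u x) * deriv u x / 2 * ((2 * κ - 1) / 8 * iteratedDeriv 3 u x))
    (fun h : ℝ ↦ h ^ 4) (𝓝 0)
  refine ((((hlin hδL).add (hlin hδR)).add hsum).add
    ((hprod.congr_right fun h ↦ by ring).add hquartic)).congr_left fun h ↦ ?_
  simp only [faceFluxDefect]
  ring

lemma flux_balance_eq_faceFluxDefect_sub (f u : ℝ → ℝ) (κ x h : ℝ) :
    f (uL κ x u h) + f (uR κ x u h) - f (uLm κ x u h) - f (uRm κ x u h)
      = faceFluxDefect f κ x u h - faceFluxDefect f κ x u (-h)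
        + 2 * (f (u (x + h / 2)) - f (u (x - h / 2))) := by
  rw [uLm_eq_uR_neg, uRm_eq_uL_neg, faceFluxDefect, faceFluxDefect, neg_div, ← sub_eq_add_neg]
  ring

lemma isBigO_sub_comp_neg_sub_cubic {D : ℝ → ℝ} {a b : ℝ}
    (hD : (fun h ↦ D h - (a * h ^ 2 + b * h ^ 3)) =O[𝓝 0] fun h ↦ h ^ 4) :
    (fun h ↦ D h - D (-h) - 2 * b * h ^ 3) =O[𝓝 0] fun h ↦ h ^ 4 := by
  have hneg := hD.comp_tendsto (continuous_neg.tendsto' (0 : ℝ) 0 neg_zero)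
  refine (hD.sub (hneg.congr_right fun h ↦ Even.neg_pow (by decide) h)).congr_left fun h ↦ ?_
  simp only [Function.comp_def]
  ring

theorem quick_flux_balance_cell_average_expansion (f u : ℝ → ℝ) (hf : ContDiff ℝ 4 f)
    (hu : ContDiff ℝ 4 u) (x κ : ℝ) :
    (fun h : ℝ =>
        (1 / (2 * h)) * (f (uL κ x u h) + f (uR κ x u h)
          - f (uLm κ x u h) - f (uRm κ x u h))
        - ((1 / h) * (∫ ξ in (x - h / 2)..(x + h / 2), deriv (f ∘ u) ξ)
           + ((2 * κ - 1) / 8) * (iteratedDeriv 2 f (u x) * deriv u x * iteratedDeriv 2 u x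
              + deriv f (u x) * iteratedDeriv 3 u x) * h ^ 2))
      =O[nhdsWithin 0 (Set.Ioi 0)] fun h : ℝ => h ^ 3 := by
  have hfu : ContDiff ℝ 1 (f ∘ u) := (hf.comp hu).of_le (by norm_num)
  have hFTC (h : ℝ) : ∫ ξ in (x - h / 2)..(x + h / 2), deriv (f ∘ u) ξ
      = f (u (x + h / 2)) - f (u (x - h / 2)) :=
    intervalIntegral.integral_deriv_eq_sub (fun t _ ↦ hfu.differentiable one_ne_zero t)
      ((hfu.continuous_deriv le_rfl).intervalIntegrable _ _)
  have hodd := isBigO_sub_comp_neg_sub_cubic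
    (isBigO_faceFluxDefect_sub_expansion (hf.of_le (by norm_num)) hu κ x)
  have hinv : (fun h : ℝ ↦ 1 / (2 * h)) =O[𝓝[>] 0] fun h ↦ h⁻¹ :=
    (isBigO_const_mul_self 2⁻¹ _ _).congr_left fun h ↦ by rw [one_div, mul_inv]
  refine (hinv.mul (hodd.mono nhdsWithin_le_nhds)).congr' ?_ ?_ <;>
    filter_upwards [self_mem_nhdsWithin] with h (hh : 0 < h)
  · rw [flux_balance_eq_faceFluxDefect_sub, hFTC]
    field_simp
    ring
  · field_simp
end
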